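/- Let d ≠ 0, f ∈ ℝ, ζ ∈ ℝ, k ∈ ℕ, and let a ∈ ℝ² be a constant solution of the Lugiato-Lefever system satisfying (ζ+dk²)² - 4|a|²(ζ+dk²) + 1 + 3|a|⁴ = 0. Then |a| ≥ 1, f² ≥ |a|², f² ≥ 1 + (|a|² - ζ)², and |d|k² ≤ √(f²-1) + f² + √(f⁴-1). In particular at most k̂(f)/2 values of k ∈ ℕ can satisfy the bifurcation condition, where k̂(f) := 2(|d|^{-1}(f² + √(f²-1) + √(f⁴-1)))^{1/2}. -/
import Mathlib


open Real

theorem stmt_15 (d ζ f a1 a2 : ℝ) (hd : d ≠ 0) (k : ℕ) (hk : 1 ≤ k)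
    (h1 : a2 + ζ * a1 - (a1 ^ 2 + a2 ^ 2) * a1 = 0)
    (h2 : a1 - ζ * a2 + (a1 ^ 2 + a2 ^ 2) * a2 - f = 0)
    (hker : (ζ + d * (k : ℝ) ^ 2) ^ 2
      - 4 * (a1 ^ 2 + a2 ^ 2) * (ζ + d * (k : ℝ) ^ 2)
      + 1 + 3 * (a1 ^ 2 + a2 ^ 2) ^ 2 = 0) :
    1 ≤ a1 ^ 2 + a2 ^ 2 ∧
    a1 ^ 2 + a2 ^ 2 ≤ f ^ 2 ∧
    1 + ((a1 ^ 2 + a2 ^ 2) - ζ) ^ 2 ≤ f ^ 2 ∧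
    |d| * (k : ℝ) ^ 2 ≤ Real.sqrt (f ^ 2 - 1) + f ^ 2 + Real.sqrt (f ^ 4 - 1) ∧
    2 * (k : ℝ) ≤ 2 * Real.sqrt (|d|⁻¹ *
      (f ^ 2 + Real.sqrt (f ^ 2 - 1) + Real.sqrt (f ^ 4 - 1))) := by
  set ρ := a1 ^ 2 + a2 ^ 2 with hρdef
  set x := ζ + d * (k : ℝ) ^ 2 with hxdef
  have hρ0 : 0 ≤ ρ := by positivity
  -- f² = ρ (1 + (ρ - ζ)²)
  have hf2 : f ^ 2 = ρ * (1 + (ρ - ζ) ^ 2) := by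
    have ha2 : a2 = (ρ - ζ) * a1 := by linear_combination h1
    have hfe : f = a1 + (ρ - ζ) * a2 := by linear_combination -h2
    linear_combination (-(a2 + ζ*a1 - ρ*a1))*h1 + (-(f + a1 + (ρ-ζ)*a2))*h2
  -- (x - 2ρ)² = ρ² - 1
  have hsq : (x - 2 * ρ) ^ 2 = ρ ^ 2 - 1 := by linear_combination hker
  have hρ1 : 1 ≤ ρ := by nlinarith [sq_nonneg (x - 2 * ρ)]
  have hfρ : ρ ≤ f ^ 2 := by nlinarith [sq_nonneg (ρ - ζ)]
  have hf3 : 1 + (ρ - ζ) ^ 2 ≤ f ^ 2 := by nlinarith [sq_nonneg (ρ - ζ)]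
  have hS1 : |ρ - ζ| ≤ Real.sqrt (f ^ 2 - 1) := by
    rw [← Real.sqrt_sq_eq_abs]
    exact Real.sqrt_le_sqrt (by linarith)
  have hS2 : |x - 2 * ρ| ≤ Real.sqrt (f ^ 4 - 1) := by
    rw [← Real.sqrt_sq_eq_abs]
    apply Real.sqrt_le_sqrt
    nlinarith
  have hb1 := abs_le.mp hS1
  have hb2 := abs_le.mp hS2
  have hdk : |d| * (k : ℝ) ^ 2 = |x - ζ| := by
    rw [hxdef]
    rw [show ζ + d * (k:ℝ)^2 - ζ = d * (k:ℝ)^2 by ring, abs_mul,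
      abs_of_nonneg (by positivity : (0:ℝ) ≤ (k:ℝ)^2)]
  have h4 : |d| * (k : ℝ) ^ 2 ≤ Real.sqrt (f ^ 2 - 1) + f ^ 2 + Real.sqrt (f ^ 4 - 1) := by
    rw [hdk]
    rw [abs_le]
    constructor <;> linarith [Real.sqrt_nonneg (f^2-1), Real.sqrt_nonneg (f^4-1)]
  refine ⟨hρ1, hfρ, hf3, h4, ?_⟩
  have habs : 0 < |d| := abs_pos.mpr hd
  have hk2 : (k : ℝ) ^ 2 ≤ |d|⁻¹ * (f ^ 2 + Real.sqrt (f ^ 2 - 1) + Real.sqrt (f ^ 4 - 1)) := by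
    rw [le_inv_mul_iff₀ habs]
    linarith
  have : (k : ℝ) ≤ Real.sqrt (|d|⁻¹ * (f ^ 2 + Real.sqrt (f ^ 2 - 1) + Real.sqrt (f ^ 4 - 1))) := by
    rw [show (k:ℝ) = Real.sqrt ((k:ℝ)^2) from (Real.sqrt_sq (by positivity)).symm]
    exact Real.sqrt_le_sqrt hk2
  linarith
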